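/- arXiv:2001.07805 — 3 statements merged into one kernel-verified Lean document; each statement's English description precedes it below -/
import Mathlib

section
/- (Theorem 2, additive corruption, general dimension) Let p* be a Borel probability measure on ℝ^d that is halfspace-symmetric with center μ* and has decay function h. Let ε ∈ [0, 1), let r be any Borel probability measure on ℝ^d, let p = (1 − ε)p* + εr, and let x be a Tukey median of p. Then D(x, p*) ≥ ((1 − ε)(1 − h(0)) − ε)/(1 − ε), and consequently for every t ≥ 0 with h(t) < ((1 − ε)(1 − h(0)) − ε)/(1 − ε) we have ‖x − μ*‖ ≤ t. -/
open MeasureTheory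
open scoped RealInnerProductSpace ENNReal

noncomputable section

abbrev Euc (d : ℕ) := EuclideanSpace ℝ (Fin d)

/-- Tukey depth of a point `μ` w.r.t. a measure `p`: the infimum over nonzero
directions `v` of the mass of the halfspace `{x | ⟪v, x - μ⟫ ≥ 0}`. -/
def tukeyDepth {d : ℕ} (μ : Euc d) (p : Measure (Euc d)) : ℝ :=
  ⨅ v : {v : Euc d // v ≠ 0}, (p {x | 0 ≤ ⟪(v : Euc d), x - μ⟫}).toReal

/-- `x` is a Tukey median of `p` if it maximizes the Tukey depth. -/
def IsTukeyMedian {d : ℕ} (x : Euc d) (p : Measure (Euc d)) : Prop :=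
  ∀ y : Euc d, tukeyDepth y p ≤ tukeyDepth x p

/-- Total variation distance: supremum over Borel sets `A` of `p A - q A`. -/
def tvDist {d : ℕ} (p q : Measure (Euc d)) : ℝ :=
  ⨆ A : {A : Set (Euc d) // MeasurableSet A}, ((p A).toReal - (q A).toReal)

/-- The halfspace metric `TV~(p, q)`. -/
def halfspaceDist {d : ℕ} (p q : Measure (Euc d)) : ℝ :=
  ⨆ vt : Euc d × ℝ,
    |(p {x | vt.2 ≤ ⟪vt.1, x⟫}).toReal - (q {x | vt.2 ≤ ⟪vt.1, x⟫}).toReal|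

/-- Halfspace symmetry around `μ`: every one-dimensional projection of `X - μ`
is symmetric in distribution. -/
def IsHalfspaceSymmetric {d : ℕ} (p : Measure (Euc d)) (μ : Euc d) : Prop :=
  ∀ v : Euc d,
    p.map (fun x => ⟪v, x - μ⟫) = p.map (fun x => -⟪v, x - μ⟫)

/-- Decay function `h(t)` of a measure `p` centered at `μ`. -/
def decay {d : ℕ} (p : Measure (Euc d)) (μ : Euc d) (t : ℝ) : ℝ :=
  ⨆ v : {v : Euc d // ‖v‖ ≤ 1}, (p {x | t < ⟪(v : Euc d), x - μ⟫}).toReal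

/-!
By symmetry every closed halfspace through `μ*` has `p*`-mass at least `1 - h(0)`, so
`D(μ*, p) ≥ (1 - ε)(1 - h(0))`. A Tukey median `x` is at least that deep in `p`, and passing
from `p` back to `p*` loses at most `ε` of mass per halfspace, which gives the depth bound.
If `‖x - μ*‖ > t`, the halfspace through `x` facing away from `μ*` lies beyond level `t` from
`μ*`, so `D(x, p*) ≤ h(t)`.
-/

variable {d : ℕ}

lemma tukeyDepth_le (p : Measure (Euc d)) (μ : Euc d) {v : Euc d} (hv : v ≠ 0) :
    tukeyDepth μ p ≤ (p {x | 0 ≤ ⟪v, x - μ⟫}).toReal := by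
  refine ciInf_le (f := fun v : {v : Euc d // v ≠ 0} => (p {x | 0 ≤ ⟪(v : Euc d), x - μ⟫}).toReal)
    ⟨0, ?_⟩ ⟨v, hv⟩
  rintro _ ⟨_, rfl⟩
  exact ENNReal.toReal_nonneg

lemma le_tukeyDepth (hd : 0 < d) {p : Measure (Euc d)} {μ : Euc d} {c : ℝ}
    (h : ∀ v : Euc d, v ≠ 0 → c ≤ (p {x | 0 ≤ ⟪v, x - μ⟫}).toReal) :
    c ≤ tukeyDepth μ p := by
  have : Nonempty (Fin d) := Fin.pos_iff_nonempty.mp hd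
  obtain ⟨v, hv⟩ := exists_ne (0 : Euc d)
  have : Nonempty {v : Euc d // v ≠ 0} := ⟨⟨v, hv⟩⟩
  exact le_ciInf fun v => h v v.2

lemma toReal_mixture_apply {α : Type*} [MeasurableSpace α] (p r : Measure α)
    [IsFiniteMeasure p] [IsFiniteMeasure r] {ε : ℝ} (hε0 : 0 ≤ ε) (hε1 : ε ≤ 1) (s : Set α) :
    ((ENNReal.ofReal (1 - ε) • p + ENNReal.ofReal ε • r) s).toReal =
      (1 - ε) * (p s).toReal + ε * (r s).toReal := by
  rw [Measure.add_apply, Measure.smul_apply, Measure.smul_apply, smul_eq_mul, smul_eq_mul,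
    ENNReal.toReal_add (by finiteness) (by finiteness), ENNReal.toReal_mul, ENNReal.toReal_mul,
    ENNReal.toReal_ofReal (by linarith), ENNReal.toReal_ofReal hε0]

section Mixture

variable (hd : 0 < d) (p r : Measure (Euc d)) {ε : ℝ} (hε0 : 0 ≤ ε) (μ : Euc d)
include hd hε0

lemma mul_tukeyDepth_le_tukeyDepth_mixture [IsFiniteMeasure p] [IsFiniteMeasure r]
    (hε1 : ε ≤ 1) :
    (1 - ε) * tukeyDepth μ p ≤
      tukeyDepth μ (ENNReal.ofReal (1 - ε) • p + ENNReal.ofReal ε • r) := by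
  refine le_tukeyDepth hd fun v hv => ?_
  rw [toReal_mixture_apply p r hε0 hε1]
  calc (1 - ε) * tukeyDepth μ p ≤ (1 - ε) * (p {x | 0 ≤ ⟪v, x - μ⟫}).toReal :=
        mul_le_mul_of_nonneg_left (tukeyDepth_le p μ hv) (by linarith)
    _ ≤ _ := le_add_of_nonneg_right (by positivity)

lemma tukeyDepth_mixture_le [IsFiniteMeasure p] [IsProbabilityMeasure r] (hε1 : ε < 1) :
    tukeyDepth μ (ENNReal.ofReal (1 - ε) • p + ENNReal.ofReal ε • r) ≤
      (1 - ε) * tukeyDepth μ p + ε := by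
  set q := ENNReal.ofReal (1 - ε) • p + ENNReal.ofReal ε • r
  have hε : 0 < 1 - ε := by linarith
  have hdiv : (tukeyDepth μ q - ε) / (1 - ε) ≤ tukeyDepth μ p := by
    refine le_tukeyDepth hd fun v hv => ?_
    have hq := tukeyDepth_le q μ hv
    rw [toReal_mixture_apply p r hε0 hε1.le] at hq
    have hr : (r {x | 0 ≤ ⟪v, x - μ⟫}).toReal ≤ 1 := measureReal_le_one
    rw [div_le_iff₀ hε]
    nlinarith
  rw [div_le_iff₀ hε] at hdiv
  linarith

end Mixture

lemma IsHalfspaceSymmetric.measure_inner_neg {q : Measure (Euc d)} {μ : Euc d}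
    (hsym : IsHalfspaceSymmetric q μ) (v : Euc d) :
    q {x | ⟪v, x - μ⟫ < 0} = q {x | 0 < ⟪v, x - μ⟫} := by
  have hf : Measurable fun x : Euc d => ⟪v, x - μ⟫ := by fun_prop
  have hg : Measurable fun x : Euc d => -⟪v, x - μ⟫ := hf.neg
  have h := congrArg (fun m => m (Set.Iio 0)) (hsym v)
  simp only [Measure.map_apply hf measurableSet_Iio, Measure.map_apply hg measurableSet_Iio] at h
  simpa [Set.preimage, neg_lt_zero] using h

lemma toReal_measure_le_decay (q : Measure (Euc d)) [IsFiniteMeasure q] (μ : Euc d) (t : ℝ)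
    {u : Euc d} (hu : ‖u‖ ≤ 1) :
    (q {x | t < ⟪u, x - μ⟫}).toReal ≤ decay q μ t := by
  refine le_ciSup (f := fun v : {v : Euc d // ‖v‖ ≤ 1} => (q {x | t < ⟪(v : Euc d), x - μ⟫}).toReal)
    ⟨(q Set.univ).toReal, ?_⟩ ⟨u, hu⟩
  rintro _ ⟨v, rfl⟩
  exact ENNReal.toReal_mono (measure_ne_top _ _) (measure_mono (Set.subset_univ _))

lemma toReal_measure_le_decay_of_ne_zero (q : Measure (Euc d)) [IsFiniteMeasure q]
    (μ : Euc d) (t : ℝ) {v : Euc d} (hv : v ≠ 0) :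
    (q {x | t * ‖v‖ < ⟪v, x - μ⟫}).toReal ≤ decay q μ t := by
  have hsets : {x | t * ‖v‖ < ⟪v, x - μ⟫} = {x | t < ⟪‖v‖⁻¹ • v, x - μ⟫} := by
    ext x
    rw [Set.mem_ofPred_eq, Set.mem_ofPred_eq, real_inner_smul_left, ← div_eq_inv_mul,
      lt_div_iff₀ (norm_pos_iff.mpr hv)]
  rw [hsets]
  exact toReal_measure_le_decay q μ t (by simpa using (norm_smul_inv_norm (𝕜 := ℝ) hv).le)

lemma IsHalfspaceSymmetric.one_sub_decay_le_tukeyDepth (hd : 0 < d) {q : Measure (Euc d)}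
    [IsProbabilityMeasure q] {μ : Euc d} (hsym : IsHalfspaceSymmetric q μ) :
    1 - decay q μ 0 ≤ tukeyDepth μ q := by
  refine le_tukeyDepth hd fun v hv => ?_
  have hmeas : MeasurableSet {x : Euc d | 0 ≤ ⟪v, x - μ⟫} :=
    measurableSet_le measurable_const (by fun_prop)
  have hcompl : {x : Euc d | 0 ≤ ⟪v, x - μ⟫}ᶜ = {x | ⟪v, x - μ⟫ < 0} := by
    ext x; simp
  have hsum := probReal_compl_eq_one_sub (μ := q) hmeas
  rw [hcompl, measureReal_def, measureReal_def, hsym.measure_inner_neg] at hsum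
  have hdecay := toReal_measure_le_decay_of_ne_zero q μ 0 hv
  rw [zero_mul] at hdecay
  linarith

lemma tukeyDepth_le_decay_of_lt_norm (q : Measure (Euc d)) [IsFiniteMeasure q]
    {x μ : Euc d} {t : ℝ} (ht : 0 ≤ t) (hlt : t < ‖x - μ‖) :
    tukeyDepth x q ≤ decay q μ t := by
  have hw : x - μ ≠ 0 := norm_pos_iff.mp (ht.trans_lt hlt)
  have hsub : {y | 0 ≤ ⟪x - μ, y - x⟫} ⊆ {y | t * ‖x - μ‖ < ⟪x - μ, y - μ⟫} := by
    intro y hy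
    have hsplit : ⟪x - μ, y - μ⟫ = ⟪x - μ, y - x⟫ + ‖x - μ‖ ^ 2 := by
      rw [← real_inner_self_eq_norm_sq, ← inner_add_right, sub_add_sub_cancel]
    have hsq : t * ‖x - μ‖ < ‖x - μ‖ ^ 2 := by
      rw [sq]; exact mul_lt_mul_of_pos_right hlt (ht.trans_lt hlt)
    simp only [Set.mem_ofPred_eq] at hy ⊢
    linarith
  calc tukeyDepth x q ≤ (q {y | 0 ≤ ⟪x - μ, y - x⟫}).toReal := tukeyDepth_le q x hw
    _ ≤ (q {y | t * ‖x - μ‖ < ⟪x - μ, y - μ⟫}).toReal :=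
      ENNReal.toReal_mono (measure_ne_top _ _) (measure_mono hsub)
    _ ≤ decay q μ t := toReal_measure_le_decay_of_ne_zero q μ t hw

/-- **Theorem 2, additive corruption, general dimension.**
If `p*` is halfspace-symmetric with center `μ*` and decay function `h`,
`p = (1 − ε) p* + ε r`, and `x` is a Tukey median of `p`, then
`D(x, p*) ≥ ((1 − ε)(1 − h(0)) − ε)/(1 − ε)`, and consequently for every `t ≥ 0`
with `h(t) < ((1 − ε)(1 − h(0)) − ε)/(1 − ε)` we have `‖x − μ*‖ ≤ t`. -/
theorem tukey_median_additive_corruption {d : ℕ} (hd : 0 < d)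
    (pstar r : Measure (Euc d))
    [IsProbabilityMeasure pstar] [IsProbabilityMeasure r]
    (μstar : Euc d) (hsym : IsHalfspaceSymmetric pstar μstar)
    (ε : ℝ) (hε0 : 0 ≤ ε) (hε1 : ε < 1)
    (p : Measure (Euc d))
    (hp : p = ENNReal.ofReal (1 - ε) • pstar + ENNReal.ofReal ε • r)
    (x : Euc d) (hx : IsTukeyMedian x p) :
    ((1 - ε) * (1 - decay pstar μstar 0) - ε) / (1 - ε) ≤ tukeyDepth x pstar ∧
    ∀ t : ℝ, 0 ≤ t →
      decay pstar μstar t < ((1 - ε) * (1 - decay pstar μstar 0) - ε) / (1 - ε) →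
      ‖x - μstar‖ ≤ t := by
  subst hp
  have hε : 0 < 1 - ε := by linarith
  have hmix : (1 - ε) * (1 - decay pstar μstar 0) ≤ (1 - ε) * tukeyDepth x pstar + ε :=
    calc (1 - ε) * (1 - decay pstar μstar 0) ≤ (1 - ε) * tukeyDepth μstar pstar :=
          mul_le_mul_of_nonneg_left (hsym.one_sub_decay_le_tukeyDepth hd) hε.le
      _ ≤ tukeyDepth μstar (ENNReal.ofReal (1 - ε) • pstar + ENNReal.ofReal ε • r) :=
          mul_tukeyDepth_le_tukeyDepth_mixture hd pstar r hε0 μstar hε1.le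
      _ ≤ tukeyDepth x (ENNReal.ofReal (1 - ε) • pstar + ENNReal.ofReal ε • r) := hx μstar
      _ ≤ (1 - ε) * tukeyDepth x pstar + ε := tukeyDepth_mixture_le hd pstar r hε0 x hε1
  have hdepth : ((1 - ε) * (1 - decay pstar μstar 0) - ε) / (1 - ε) ≤ tukeyDepth x pstar := by
    rw [div_le_iff₀ hε]; linarith
  refine ⟨hdepth, fun t ht hlt => ?_⟩
  by_contra! hfar
  linarith [tukeyDepth_le_decay_of_lt_norm pstar ht hfar]

end
end

section
/- (Theorem 2, additive corruption, dimension one) Let p* be a Borel probability measure on ℝ that is halfspace-symmetric with center μ* and has decay function h. Let ε ∈ [0, 1), let r be any Borel probability measure on ℝ, let p = (1 − ε)p* + εr, and let x be a Tukey median of p. Then D(x, p*) ≥ max(((1 − ε)(1 − h(0)) − ε)/(1 − ε), (1/2 − ε)/(1 − ε)), and consequently for every t ≥ 0 with h(t) < max(((1 − ε)(1 − h(0)) − ε)/(1 − ε), (1/2 − ε)/(1 − ε)) we have |x − μ*| ≤ t. -/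
/-!
For `p = (1 - ε) p* + ε r`, every halfline `H` satisfies
`(1 - ε) p*(H) ≤ p(H) ≤ (1 - ε) p*(H) + ε`, hence
`(1 - ε) D(y, p*) ≤ D(y, p) ≤ (1 - ε) D(y, p*) + ε`. As the Tukey median `x` maximizes `D(·, p)`,
`D(x, p*) ≥ (D(y, p) - ε) / (1 - ε)` for every `y`. Taking `y = μ*`, where
`D(μ*, p*) ≥ 1 - h(0)`, and `y` a median of `p`, where `D(y, p) ≥ 1/2`, gives the depth bound.
If `|x - μ*| > t`, one of the two halflines ending at `x` lies in `{v (· - μ*) > t}` for `v = ±1`,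
so `D(x, p*) ≤ h(t)`.
-/

open MeasureTheory
open scoped ENNReal

noncomputable section

/-- One-dimensional Tukey depth: `min (p [μ, ∞)) (p (-∞, μ])`. -/
def tukeyDepth1 (μ : ℝ) (p : Measure ℝ) : ℝ :=
  min (p (Set.Ici μ)).toReal (p (Set.Iic μ)).toReal

/-- `x` is a Tukey median (in dimension one) of `p`. -/
def IsTukeyMedian1 (x : ℝ) (p : Measure ℝ) : Prop :=
  ∀ y : ℝ, tukeyDepth1 y p ≤ tukeyDepth1 x p

/-- Total variation distance on `ℝ`: supremum over Borel sets `A` of `p A - q A`. -/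
def tvDist1 (p q : Measure ℝ) : ℝ :=
  ⨆ A : {A : Set ℝ // MeasurableSet A}, ((p A).toReal - (q A).toReal)

/-- Halfspace symmetry on `ℝ` around `μ`: every projection `v * (x - μ)` is
symmetric in distribution. -/
def IsHalfspaceSymmetric1 (p : Measure ℝ) (μ : ℝ) : Prop :=
  ∀ v : ℝ, p.map (fun x => v * (x - μ)) = p.map (fun x => -(v * (x - μ)))

/-- Decay function on `ℝ` centered at `μ`. -/
def decay1 (p : Measure ℝ) (μ : ℝ) (t : ℝ) : ℝ :=
  ⨆ v : {v : ℝ // |v| ≤ 1}, (p {x | t < (v : ℝ) * (x - μ)}).toReal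

open Set Filter Topology ProbabilityTheory Function

lemma toReal_ofReal_smul_add_ofReal_smul_apply {α : Type*} [MeasurableSpace α]
    (P r : Measure α) [IsFiniteMeasure P] [IsFiniteMeasure r] {a b : ℝ} (ha : 0 ≤ a) (hb : 0 ≤ b)
    (A : Set α) :
    ((ENNReal.ofReal a • P + ENNReal.ofReal b • r) A).toReal =
      a * (P A).toReal + b * (r A).toReal := by
  simp only [Measure.add_apply, Measure.smul_apply, smul_eq_mul]
  rw [ENNReal.toReal_add (by finiteness) (by finiteness), ENNReal.toReal_mul,
    ENNReal.toReal_mul, ENNReal.toReal_ofReal ha, ENNReal.toReal_ofReal hb]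

lemma isProbabilityMeasure_ofReal_smul_add_ofReal_smul {α : Type*} [MeasurableSpace α]
    (P r : Measure α) [IsProbabilityMeasure P] [IsProbabilityMeasure r] {ε : ℝ} (hε0 : 0 ≤ ε)
    (hε1 : ε ≤ 1) :
    IsProbabilityMeasure (ENNReal.ofReal (1 - ε) • P + ENNReal.ofReal ε • r) := by
  constructor
  simp only [Measure.add_apply, Measure.smul_apply, smul_eq_mul, measure_univ, mul_one]
  rw [← ENNReal.ofReal_add (by linarith) hε0]
  simp

section Mixture

variable (P r : Measure ℝ) [IsFiniteMeasure P] {ε : ℝ} (hε0 : 0 ≤ ε) (hε1 : ε ≤ 1)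
include hε0 hε1

lemma mul_tukeyDepth1_le_tukeyDepth1_mixture [IsFiniteMeasure r] (y : ℝ) :
    (1 - ε) * tukeyDepth1 y P ≤
      tukeyDepth1 y (ENNReal.ofReal (1 - ε) • P + ENNReal.ofReal ε • r) := by
  have hmix := toReal_ofReal_smul_add_ofReal_smul_apply P r (sub_nonneg.2 hε1) hε0
  have hle : ∀ A, (1 - ε) * (P A).toReal ≤ (1 - ε) * (P A).toReal + ε * (r A).toReal :=
    fun A ↦ le_add_of_nonneg_right (by positivity)
  rw [tukeyDepth1, tukeyDepth1, mul_min_of_nonneg _ _ (sub_nonneg.2 hε1), hmix, hmix]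
  exact min_le_min (hle _) (hle _)

lemma tukeyDepth1_mixture_le [IsProbabilityMeasure r] (y : ℝ) :
    tukeyDepth1 y (ENNReal.ofReal (1 - ε) • P + ENNReal.ofReal ε • r) ≤
      (1 - ε) * tukeyDepth1 y P + ε := by
  have hmix := toReal_ofReal_smul_add_ofReal_smul_apply P r (sub_nonneg.2 hε1) hε0
  have hle : ∀ A, (1 - ε) * (P A).toReal + ε * (r A).toReal ≤ (1 - ε) * (P A).toReal + ε :=
    fun A ↦ by gcongr; exact mul_le_of_le_one_right hε0 measureReal_le_one
  rw [tukeyDepth1, tukeyDepth1, mul_min_of_nonneg _ _ (sub_nonneg.2 hε1), ← min_add_add_right,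
    hmix, hmix]
  exact min_le_min (hle _) (hle _)

end Mixture

lemma exists_one_half_le_tukeyDepth1 (p : Measure ℝ) [IsProbabilityMeasure p] :
    ∃ m, 1 / 2 ≤ tukeyDepth1 m p := by
  set F := cdf p
  set S := {y | 1 / 2 ≤ F y}
  have hS_ne : S.Nonempty :=
    ((tendsto_cdf_atTop p).eventually (eventually_ge_nhds (by norm_num : (1 / 2 : ℝ) < 1))).exists
  have hS_bdd : BddBelow S := by
    obtain ⟨b, hb⟩ := ((tendsto_cdf_atBot p).eventually
      (eventually_lt_nhds (by norm_num : (0 : ℝ) < 1 / 2))).exists_forall_of_atBot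
    exact ⟨b, fun y hy ↦ le_of_not_gt fun hyb ↦ (hb y hyb.le).not_ge hy⟩
  set m := sInf S
  have hIic : 1 / 2 ≤ F m := by
    refine ge_of_tendsto ((F.right_continuous m).mono Ioi_subset_Ici_self)
      (eventually_nhdsWithin_of_forall fun y hy ↦ ?_)
    obtain ⟨s, hs, hsy⟩ := exists_lt_of_csInf_lt hS_ne hy
    exact hs.trans (F.mono hsy.le)
  have hleftLim : leftLim F m ≤ 1 / 2 :=
    le_of_tendsto (F.mono.tendsto_leftLim m) (eventually_nhdsWithin_of_forall fun y hy ↦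
      (not_le.1 (notMem_of_lt_csInf (s := S) hy hS_bdd)).le)
  have hIci : (p (Ici m)).toReal = 1 - leftLim F m := by
    rw [← measure_cdf p, F.measure_Ici (tendsto_cdf_atTop p), ENNReal.toReal_ofReal (by linarith)]
  refine ⟨m, le_min ?_ ?_⟩
  · linarith
  · rw [cdf_eq_real] at hIic
    exact hIic

section Decay

variable (P : Measure ℝ) [IsFiniteMeasure P] (μ : ℝ)

lemma toReal_le_decay1_of_subset {t v : ℝ} (hv : |v| ≤ 1) {A : Set ℝ}
    (hA : A ⊆ {x | t < v * (x - μ)}) : (P A).toReal ≤ decay1 P μ t := by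
  have hbdd : BddAbove (range fun w : {w : ℝ // |w| ≤ 1} ↦ (P {x | t < w * (x - μ)}).toReal) :=
    ⟨(P univ).toReal, by
      rintro _ ⟨w, rfl⟩
      exact ENNReal.toReal_mono (by finiteness) (measure_mono (subset_univ _))⟩
  exact (ENNReal.toReal_mono (by finiteness) (measure_mono hA)).trans
    (le_ciSup hbdd (⟨v, hv⟩ : {w : ℝ // |w| ≤ 1}))

lemma one_sub_decay1_zero_le_tukeyDepth1 [IsProbabilityMeasure P] :
    1 - decay1 P μ 0 ≤ tukeyDepth1 μ P := by
  have hIio : (P (Iio μ)).toReal ≤ decay1 P μ 0 :=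
    toReal_le_decay1_of_subset P μ (v := -1) (by simp) fun y (hy : y < μ) ↦
      show (0 : ℝ) < -1 * (y - μ) by linarith
  have hIoi : (P (Ioi μ)).toReal ≤ decay1 P μ 0 :=
    toReal_le_decay1_of_subset P μ (v := 1) (by simp) fun y (hy : μ < y) ↦
      show (0 : ℝ) < 1 * (y - μ) by linarith
  have hIci : (P (Ici μ)).toReal = 1 - (P (Iio μ)).toReal := by
    rw [← compl_Iio]; exact probReal_compl_eq_one_sub measurableSet_Iio
  have hIic : (P (Iic μ)).toReal = 1 - (P (Ioi μ)).toReal := by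
    rw [← compl_Ioi]; exact probReal_compl_eq_one_sub measurableSet_Ioi
  exact le_min (by linarith) (by linarith)

lemma abs_sub_le_of_decay1_lt_tukeyDepth1 {t x : ℝ} (h : decay1 P μ t < tukeyDepth1 x P) :
    |x - μ| ≤ t := by
  refine abs_sub_le_iff.2 ⟨le_of_not_gt fun hx ↦ h.not_ge ?_, le_of_not_gt fun hx ↦ h.not_ge ?_⟩
  · exact (min_le_left _ _).trans <| toReal_le_decay1_of_subset P μ (v := 1) (by simp)
      fun y (hy : x ≤ y) ↦ show t < 1 * (y - μ) by linarith
  · exact (min_le_right _ _).trans <| toReal_le_decay1_of_subset P μ (v := -1) (by simp)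
      fun y (hy : y ≤ x) ↦ show t < -1 * (y - μ) by linarith

end Decay

lemma IsTukeyMedian1.div_le_tukeyDepth1_of_mixture {P r : Measure ℝ} [IsFiniteMeasure P]
    [IsProbabilityMeasure r] {ε : ℝ} (hε0 : 0 ≤ ε) (hε1 : ε < 1) {x : ℝ}
    (hx : IsTukeyMedian1 x (ENNReal.ofReal (1 - ε) • P + ENNReal.ofReal ε • r)) {c y : ℝ}
    (hc : c ≤ tukeyDepth1 y (ENNReal.ofReal (1 - ε) • P + ENNReal.ofReal ε • r)) :
    (c - ε) / (1 - ε) ≤ tukeyDepth1 x P := by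
  rw [div_le_iff₀ (by linarith)]
  linarith [hc.trans (hx y), tukeyDepth1_mixture_le P r hε0 hε1.le x]

theorem tukey_median_additive_corruption_dim_one_general
    (pstar r : Measure ℝ)
    [IsProbabilityMeasure pstar] [IsProbabilityMeasure r]
    (μstar : ℝ)
    (ε : ℝ) (hε0 : 0 ≤ ε) (hε1 : ε < 1)
    (p : Measure ℝ)
    (hp : p = ENNReal.ofReal (1 - ε) • pstar + ENNReal.ofReal ε • r)
    (x : ℝ) (hx : IsTukeyMedian1 x p) :
    max (((1 - ε) * (1 - decay1 pstar μstar 0) - ε) / (1 - ε)) ((1 / 2 - ε) / (1 - ε))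
        ≤ tukeyDepth1 x pstar ∧
    ∀ t : ℝ, 0 ≤ t →
      decay1 pstar μstar t <
        max (((1 - ε) * (1 - decay1 pstar μstar 0) - ε) / (1 - ε)) ((1 / 2 - ε) / (1 - ε)) →
      |x - μstar| ≤ t := by
  subst hp
  have := isProbabilityMeasure_ofReal_smul_add_ofReal_smul pstar r hε0 hε1.le
  have hcenter := (mul_le_mul_of_nonneg_left (one_sub_decay1_zero_le_tukeyDepth1 pstar μstar)
    (sub_nonneg.2 hε1.le)).trans (mul_tukeyDepth1_le_tukeyDepth1_mixture pstar r hε0 hε1.le μstar)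
  obtain ⟨m, hm⟩ := exists_one_half_le_tukeyDepth1
    (ENNReal.ofReal (1 - ε) • pstar + ENNReal.ofReal ε • r)
  have hmax := max_le (hx.div_le_tukeyDepth1_of_mixture hε0 hε1 hcenter)
    (hx.div_le_tukeyDepth1_of_mixture hε0 hε1 hm)
  exact ⟨hmax, fun t _ ht ↦ abs_sub_le_of_decay1_lt_tukeyDepth1 pstar μstar (ht.trans_le hmax)⟩

/-- **Theorem 2, additive corruption, dimension one.**
If `p*` on `ℝ` is halfspace-symmetric with center `μ*` and decay function `h`,
`p = (1 − ε) p* + ε r`, and `x` is a Tukey median of `p`, then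
`D(x, p*) ≥ max(((1 − ε)(1 − h(0)) − ε)/(1 − ε), (1/2 − ε)/(1 − ε))`, and
consequently for every `t ≥ 0` with `h(t)` below that bound, `|x − μ*| ≤ t`. -/
theorem tukey_median_additive_corruption_dim_one
    (pstar r : Measure ℝ)
    [IsProbabilityMeasure pstar] [IsProbabilityMeasure r]
    (μstar : ℝ) (hsym : IsHalfspaceSymmetric1 pstar μstar)
    (ε : ℝ) (hε0 : 0 ≤ ε) (hε1 : ε < 1)
    (p : Measure ℝ)
    (hp : p = ENNReal.ofReal (1 - ε) • pstar + ENNReal.ofReal ε • r)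
    (x : ℝ) (hx : IsTukeyMedian1 x p) :
    max (((1 - ε) * (1 - decay1 pstar μstar 0) - ε) / (1 - ε)) ((1 / 2 - ε) / (1 - ε))
        ≤ tukeyDepth1 x pstar ∧
    ∀ t : ℝ, 0 ≤ t →
      decay1 pstar μstar t <
        max (((1 - ε) * (1 - decay1 pstar μstar 0) - ε) / (1 - ε)) ((1 / 2 - ε) / (1 - ε)) →
      |x - μstar| ≤ t :=
  tukey_median_additive_corruption_dim_one_general pstar r μstar ε hε0 hε1 p hp x hx

end
end

section
/- (Theorem 4, TV~ projection algorithm) Let h : [0, ∞) → [0, ∞) be a non-increasing function and let G(h) be the set of Borel probability measures on ℝ^d that are halfspace-symmetric with some center μ and satisfy sup_{v ∈ ℝ^d, ‖v‖ ≤ 1} p({x : ⟨v, x − μ⟩ > t}) ≤ h(t) for all t ≥ 0. Let p* ∈ G(h) have center μ*, let p be a Borel probability measure with TV(p, p*) ≤ ε where ε < 1/2, and let q ∈ G(h) with center μ_q satisfy TV~(q, p) ≤ TV~(g, p) for every g ∈ G(h) (i.e., q is a TV~-projection of p onto G(h)). Then for every t ≥ 0 with h(t) < 1/2 − ε, ‖μ_q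 − μ*‖ ≤ 2t. -/
/-
If `‖μq - μ*‖ > 2t`, let `H` be the closed halfspace orthogonal to `μq - μ*` through their
midpoint. The decay bound gives `p*(H) ≤ h(t)`, and symmetry of `q` about `μq` with the decay
bound gives `q(H) ≥ 1 - h(t)`. Since `q` is a `TV~`-projection and `p* ∈ G(h)`,
`|q(H) - p(H)| ≤ TV~(p*, p) ≤ TV(p, p*) ≤ ε`, and `p(H) - p*(H) ≤ ε`; hence
`1 - 2 h(t) ≤ 2ε`, contradicting `h(t) < 1/2 - ε`.
-/

open MeasureTheory
open scoped RealInnerProductSpace ENNReal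

noncomputable section

lemma exists_norm_eq_one_inner_eq_norm {E : Type*} [NormedAddCommGroup E] [InnerProductSpace ℝ E]
    {x : E} (hx : x ≠ 0) : ∃ v : E, ‖v‖ = 1 ∧ ⟪v, x⟫ = ‖x‖ := by
  refine ⟨‖x‖⁻¹ • x, norm_smul_inv_norm hx, ?_⟩
  rw [real_inner_smul_left, real_inner_self_eq_norm_mul_norm, ← mul_assoc,
    inv_mul_cancel₀ (norm_ne_zero_iff.mpr hx), one_mul]

section

variable {d : ℕ}

lemma measurableSet_le_inner (v : Euc d) (s : ℝ) : MeasurableSet {x : Euc d | s ≤ ⟪v, x⟫} :=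
  measurableSet_le measurable_const measurable_id.const_inner

lemma sub_le_tvDist (p q : Measure (Euc d)) [IsProbabilityMeasure p] {A : Set (Euc d)}
    (hA : MeasurableSet A) : p.real A - q.real A ≤ tvDist p q := by
  refine le_ciSup (f := fun A : {A : Set (Euc d) // MeasurableSet A} => p.real A - q.real A)
    ⟨1, ?_⟩ ⟨A, hA⟩
  rintro _ ⟨B, rfl⟩
  exact (sub_le_self _ measureReal_nonneg).trans measureReal_le_one

lemma abs_sub_le_tvDist (p q : Measure (Euc d)) [IsProbabilityMeasure p] [IsProbabilityMeasure q]
    {A : Set (Euc d)} (hA : MeasurableSet A) : |p.real A - q.real A| ≤ tvDist p q := by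
  have hcompl := sub_le_tvDist p q hA.compl
  rw [probReal_compl_eq_one_sub hA, probReal_compl_eq_one_sub hA] at hcompl
  exact abs_le.mpr ⟨by linarith, sub_le_tvDist p q hA⟩

lemma abs_sub_le_halfspaceDist (p q : Measure (Euc d)) [IsProbabilityMeasure p]
    [IsProbabilityMeasure q] (v : Euc d) (s : ℝ) :
    |p.real {x | s ≤ ⟪v, x⟫} - q.real {x | s ≤ ⟪v, x⟫}| ≤ halfspaceDist p q := by
  refine le_ciSup (f := fun vt : Euc d × ℝ =>
    |p.real {x | vt.2 ≤ ⟪vt.1, x⟫} - q.real {x | vt.2 ≤ ⟪vt.1, x⟫}|) ⟨1, ?_⟩ (v, s)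
  rintro _ ⟨vt, rfl⟩
  exact abs_sub_le_of_nonneg_of_le measureReal_nonneg measureReal_le_one measureReal_nonneg
    measureReal_le_one

lemma halfspaceDist_le_tvDist (p q : Measure (Euc d)) [IsProbabilityMeasure p]
    [IsProbabilityMeasure q] : halfspaceDist q p ≤ tvDist p q :=
  ciSup_le fun vt => by
    rw [abs_sub_comm]
    exact abs_sub_le_tvDist p q (measurableSet_le_inner vt.1 vt.2)

lemma measureReal_le_decay (p : Measure (Euc d)) [IsProbabilityMeasure p] (μ : Euc d) (t : ℝ)
    {v : Euc d} (hv : ‖v‖ ≤ 1) : p.real {x | t < ⟪v, x - μ⟫} ≤ decay p μ t :=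
  le_ciSup (f := fun v : {v : Euc d // ‖v‖ ≤ 1} => p.real {x | t < ⟪(v : Euc d), x - μ⟫})
    ⟨1, by rintro _ ⟨w, rfl⟩; exact measureReal_le_one⟩ ⟨v, hv⟩

lemma measureReal_halfspace_le_decay (p : Measure (Euc d)) [IsProbabilityMeasure p] (μ : Euc d)
    {t s : ℝ} {v : Euc d} (hv : ‖v‖ ≤ 1) (hs : t + ⟪v, μ⟫ < s) :
    p.real {x | s ≤ ⟪v, x⟫} ≤ decay p μ t := by
  refine (measureReal_mono fun x hx => ?_).trans (measureReal_le_decay p μ t hv)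
  simp only [Set.mem_ofPred_eq, inner_sub_right] at hx ⊢
  linarith

lemma IsHalfspaceSymmetric.measure_neg_le_inner {q : Measure (Euc d)} {μ : Euc d}
    (hq : IsHalfspaceSymmetric q μ) (v : Euc d) (c : ℝ) :
    q {x | -c ≤ ⟪v, x - μ⟫} = q {x | ⟪v, x - μ⟫ ≤ c} := by
  have hf : Measurable fun x : Euc d => ⟪v, x - μ⟫ := (measurable_id.sub_const μ).const_inner
  have hmap := congrArg (· (Set.Ici (-c))) (hq v)
  simp only [Measure.map_apply hf measurableSet_Ici,
    Measure.map_apply (f := fun x => -⟪v, x - μ⟫) hf.neg measurableSet_Ici] at hmap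
  convert hmap using 2 <;> ext x <;> simp

lemma IsHalfspaceSymmetric.one_sub_decay_le_measureReal {q : Measure (Euc d)}
    [IsProbabilityMeasure q] {μ : Euc d} (hq : IsHalfspaceSymmetric q μ) {t s : ℝ} {v : Euc d}
    (hv : ‖v‖ ≤ 1) (hs : s ≤ ⟪v, μ⟫ - t) : 1 - decay q μ t ≤ q.real {x | s ≤ ⟪v, x⟫} := by
  have hmeas : MeasurableSet {x : Euc d | t < ⟪v, x - μ⟫} :=
    measurableSet_lt measurable_const (measurable_id.sub_const μ).const_inner
  calc 1 - decay q μ t ≤ 1 - q.real {x | t < ⟪v, x - μ⟫} := by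
        linarith [measureReal_le_decay q μ t hv]
    _ = q.real {x | -t ≤ ⟪v, x - μ⟫} := by
        rw [← probReal_compl_eq_one_sub hmeas, measureReal_def, measureReal_def,
          hq.measure_neg_le_inner]
        simp only [Set.compl_ofPred, not_lt]
    _ ≤ q.real {x | s ≤ ⟪v, x⟫} := measureReal_mono fun x hx => by
        simp only [Set.mem_ofPred_eq, inner_sub_right] at hx ⊢
        linarith

end

theorem halfspace_projection_algorithm_general {d : ℕ}
    (h : ℝ → ℝ)
    (pstar : Measure (Euc d)) [IsProbabilityMeasure pstar]
    (μstar : Euc d)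
    (hsymp : IsHalfspaceSymmetric pstar μstar)
    (hdecp : ∀ t, 0 ≤ t → decay pstar μstar t ≤ h t)
    (p : Measure (Euc d)) [IsProbabilityMeasure p]
    (ε : ℝ) (htv : tvDist p pstar ≤ ε)
    (q : Measure (Euc d)) [IsProbabilityMeasure q]
    (μq : Euc d)
    (hsymq : IsHalfspaceSymmetric q μq)
    (hdecq : ∀ t, 0 ≤ t → decay q μq t ≤ h t)
    (hproj : ∀ g : Measure (Euc d), IsProbabilityMeasure g →
      (∃ ν : Euc d, IsHalfspaceSymmetric g ν ∧ ∀ t, 0 ≤ t → decay g ν t ≤ h t) →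
      halfspaceDist q p ≤ halfspaceDist g p) :
    ∀ t : ℝ, 0 ≤ t → h t < 1 / 2 - ε → ‖μq - μstar‖ ≤ 2 * t := by
  intro t ht hht
  by_contra! hfar
  obtain ⟨v, hv, hvμ⟩ := exists_norm_eq_one_inner_eq_norm
    (norm_pos_iff.mp (show 0 < ‖μq - μstar‖ by linarith))
  rw [inner_sub_right] at hvμ
  set s := ⟪v, μstar⟫ + ‖μq - μstar‖ / 2 with hs
  let H := {x : Euc d | s ≤ ⟪v, x⟫}
  have hpstar : pstar.real H ≤ h t :=
    (measureReal_halfspace_le_decay pstar μstar hv.le (by linarith)).trans (hdecp t ht)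
  have hq : 1 - h t ≤ q.real H :=
    (sub_le_sub_left (hdecq t ht) 1).trans (hsymq.one_sub_decay_le_measureReal hv.le (by linarith))
  have hqp : q.real H - p.real H ≤ ε :=
    (le_abs_self _).trans <| (abs_sub_le_halfspaceDist q p v s).trans <|
      (hproj pstar inferInstance ⟨μstar, hsymp, hdecp⟩).trans <|
        (halfspaceDist_le_tvDist p pstar).trans htv
  have hppstar : p.real H - pstar.real H ≤ ε :=
    (sub_le_tvDist p pstar (measurableSet_le_inner v s)).trans htv
  linarith

/-- **Theorem 4, TV~ projection algorithm.** Let `G(h)` be the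
class of halfspace-symmetric probability measures with decay bound `h`
(non-increasing, non-negative on `[0, ∞)`). Let `p* ∈ G(h)` with center `μ*`,
let `TV(p, p*) ≤ ε < 1/2`, and let `q ∈ G(h)` with center `μ_q` be a
`TV~`-projection of `p` onto `G(h)`. Then for every `t ≥ 0` with
`h(t) < 1/2 − ε` we have `‖μ_q − μ*‖ ≤ 2t`. -/
theorem halfspace_projection_algorithm {d : ℕ}
    (h : ℝ → ℝ) (hmono : AntitoneOn h (Set.Ici 0)) (hnonneg : ∀ t, 0 ≤ t → 0 ≤ h t)
    (pstar : Measure (Euc d)) [IsProbabilityMeasure pstar]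
    (μstar : Euc d)
    (hsymp : IsHalfspaceSymmetric pstar μstar)
    (hdecp : ∀ t, 0 ≤ t → decay pstar μstar t ≤ h t)
    (p : Measure (Euc d)) [IsProbabilityMeasure p]
    (ε : ℝ) (hε : ε < 1 / 2) (htv : tvDist p pstar ≤ ε)
    (q : Measure (Euc d)) [IsProbabilityMeasure q]
    (μq : Euc d)
    (hsymq : IsHalfspaceSymmetric q μq)
    (hdecq : ∀ t, 0 ≤ t → decay q μq t ≤ h t)
    (hproj : ∀ g : Measure (Euc d), IsProbabilityMeasure g →
      (∃ ν : Euc d, IsHalfspaceSymmetric g ν ∧ ∀ t, 0 ≤ t → decay g ν t ≤ h t) →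
      halfspaceDist q p ≤ halfspaceDist g p) :
    ∀ t : ℝ, 0 ≤ t → h t < 1 / 2 - ε → ‖μq - μstar‖ ≤ 2 * t :=
  halfspace_projection_algorithm_general h pstar μstar hsymp hdecp p ε htv q μq hsymq hdecq hproj

end
end
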